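/- arXiv:1905.11059 — 4 statements merged into one kernel-verified Lean document; each statement's English description precedes it below -/
import Mathlib

section
/- If $p$ is a type over a model $M$ that is $M$-definable, and $a_1$ realizes $p$, then for any $a_2$ algebraic over $M \cup \{a_1\}$, the type $\mathrm{tp}(a_2/M)$ is also $M$-definable. -/
open FirstOrder FirstOrder.Language Set

universe u

namespace DefinableTypes

variable {L : FirstOrder.Language.{u, u}}

/-- The type of the tuple `a` over the elementary substructure `S` (inside the ambient
(monster) model) is definable over `S`: for every formula `φ(x, y)`, the set of parameter
tuples `c` from `S` such that `φ(a, c)` holds is definable in `S` with parameters from `S`. -/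
def DefinableTypeOver {U : Type u} [L.Structure U]
    (S : L.ElementarySubstructure U) {α : Type*} (a : α → U) : Prop :=
  ∀ (n : ℕ) (φ : L.Formula (α ⊕ (Fin n))),
    Set.Definable (Set.univ : Set S) L
      {c : Fin n → S | φ.Realize (Sum.elim a (fun i => ((c i : U))))}

/-- The algebraic closure of a set `A` in a structure `N`: the set of elements satisfying a
formula with parameters from `A` which has only finitely many realizations. -/
def aclSet (L : FirstOrder.Language.{u, u}) {N : Type u} [L.Structure N] (A : Set N) : Set N :=
  {x | ∃ (n : ℕ) (φ : L.Formula (Fin 1 ⊕ Fin n)) (c : Fin n → N),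
    (∀ i, c i ∈ A) ∧ φ.Realize (Sum.elim (fun _ => x) c) ∧
    {y : N | φ.Realize (Sum.elim (fun _ => y) c)}.Finite}

/-!
The `(M ∪ {a₁})`-definable sets containing `a₂` are closed under intersection and one of them is
finite, so there is a least one, `X`. For parameters `c` from `M`, `ψ(a₂, c)` then holds iff
`X ⊆ ψ(U, c)`. Writing `X` with finitely many parameters `d` from `M` and with `a₁`, the latter
says that `a₁` satisfies `∀ y, θ(y, x, d) → ψ(y, c)`, a condition on `c` that is `M`-definable
because `tp(a₁/M)` is.
-/

theorem exists_isLeast_of_inter_mem {α : Type*} {F : Set (Set α)}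
    (hF : ∀ s ∈ F, ∀ t ∈ F, s ∩ t ∈ F) {s₀ : Set α} (hs₀ : s₀ ∈ F) (hfin : s₀.Finite) :
    ∃ s, IsLeast F s := by
  obtain ⟨s, -, hmin⟩ := (hfin.finite_subsets.subset fun t ht => ht.2).exists_le_minimal
    (show s₀ ∈ {t ∈ F | t ⊆ s₀} from ⟨hs₀, subset_rfl⟩)
  refine ⟨s, hmin.prop.1, fun t ht => ?_⟩
  have hst : s ∩ t ∈ {t ∈ F | t ⊆ s₀} :=
    ⟨hF s hmin.prop.1 t ht, inter_subset_left.trans hmin.prop.2⟩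
  exact (hmin.le_of_le hst inter_subset_left).trans inter_subset_right

section

variable {N : Type u} [L.Structure N] {A : Set N}

theorem definable_setOf_realize_sumElim {β γ : Type*} (φ : L.Formula (β ⊕ γ)) {c : γ → N}
    (hc : ∀ i, c i ∈ A) : A.Definable L {v : β → N | φ.Realize (Sum.elim v c)} := by
  rw [definable_iff_exists_formula_sum]
  refine ⟨φ.relabel (Sum.elim Sum.inr fun i => Sum.inl ⟨c i, hc i⟩), ?_⟩
  ext v
  simp only [mem_ofPred_eq, Formula.realize_relabel]
  congr! 1
  ext (i | i) <;> rfl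

theorem definable_setOf_subset_realize {β γ : Type*} [Finite β] {X : Set (β → N)}
    (hX : A.Definable L X) (φ : L.Formula (β ⊕ γ)) :
    A.Definable L {w : γ → N | X ⊆ {v | φ.Realize (Sum.elim v w)}} := by
  have hφ : A.Definable L {u : γ ⊕ β → N | (φ.relabel Sum.swap).Realize u} :=
    (empty_definable_iff.2 ⟨_, rfl⟩).mono (empty_subset A)
  convert ((hX.preimage_comp Sum.inr).himp hφ).forall_of_finite using 1
  ext w
  simp only [mem_ofPred_eq, subset_def, himp_eq]
  simp [Formula.realize_relabel, imp_iff_not_or, or_comm]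

theorem exists_finite_definable_of_mem_aclSet {x : N} (hx : x ∈ aclSet L A) :
    ∃ X : Set (Fin 1 → N), A.Definable L X ∧ (fun _ => x) ∈ X ∧ X.Finite := by
  obtain ⟨n, φ, c, hc, hφx, hfin⟩ := hx
  have hconst : ∀ v : Fin 1 → N, (fun _ => v 0) = v :=
    fun v => funext fun i => by rw [Subsingleton.elim i 0]
  refine ⟨{v | φ.Realize (Sum.elim v c)}, definable_setOf_realize_sumElim φ hc, hφx,
    (hfin.image fun y _ => y).subset fun v hv => ⟨v 0, ?_, hconst v⟩⟩
  rwa [mem_ofPred_eq, hconst v]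

theorem exists_finset_formula_of_definable_union_range {α γ : Type*} {a : α → N}
    {Z : Set (γ → N)} (hZ : (A ∪ range a).Definable L Z) :
    ∃ D : Finset N, ↑D ⊆ A ∧ ∃ φ : L.Formula ((α ⊕ D) ⊕ γ),
      Z = {w | φ.Realize (Sum.elim (Sum.elim a (↑)) w)} := by
  classical
  obtain ⟨A₀, hA₀, hZ₀⟩ := definable_iff_finitely_definable.1 hZ
  obtain ⟨θ, rfl⟩ := definable_iff_exists_formula_sum.1 hZ₀
  let D := A₀.filter (· ∈ A)
  have hr : ∀ x : (A₀ : Set N), ∃ j : α ⊕ D, Sum.elim a (↑) j = (x : N) := by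
    rintro ⟨x, hx⟩
    by_cases hxA : x ∈ A
    · exact ⟨Sum.inr ⟨x, Finset.mem_filter.2 ⟨hx, hxA⟩⟩, rfl⟩
    · obtain ⟨j, rfl⟩ := (hA₀ hx).resolve_left hxA
      exact ⟨Sum.inl j, rfl⟩
  choose r hr using hr
  refine ⟨D, fun x hx => (Finset.mem_filter.1 hx).2, θ.relabel (Sum.map r id), ?_⟩
  ext w
  simp only [mem_ofPred_eq, Formula.realize_relabel, Sum.elim_comp_map]
  congr! 2
  exact (funext hr).symm

end

section

variable {U : Type u} [L.Structure U] {S : L.ElementarySubstructure U} {α : Type*} {a : α → U}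

theorem DefinableTypeOver.definable_setOf_realize (h : DefinableTypeOver S a) {β : Type*}
    [Finite β] (φ : L.Formula (α ⊕ β)) :
    (univ : Set S).Definable L {c : β → S | φ.Realize (Sum.elim a fun i => (c i : U))} := by
  obtain ⟨n, ⟨e⟩⟩ := Finite.exists_equiv_fin β
  convert (h n (φ.relabel (Sum.map id e))).preimage_comp e.symm using 1
  ext c
  simp only [mem_ofPred_eq, mem_preimage, Formula.realize_relabel]
  congr! 1
  ext (i | i) <;> simp

theorem DefinableTypeOver.definable_setOf_realize_sumElim (h : DefinableTypeOver S a)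
    {K γ : Type*} [Finite K] [Finite γ] (φ : L.Formula ((α ⊕ K) ⊕ γ)) (d : K → S) :
    (univ : Set S).Definable L
      {c : γ → S | φ.Realize (Sum.elim (Sum.elim a fun i => (d i : U)) fun i => (c i : U))} := by
  have hd : (univ : Set S).DefinableMap L fun c : γ → S => Sum.elim d c := by
    rintro (i | i)
    · exact L.definableFun_const _ (mem_univ (d i))
    · exact DefinableFun.proj L
  convert (h.definable_setOf_realize (φ.relabel (Equiv.sumAssoc α K γ))).preimage_map hd
    using 1
  ext c
  simp only [mem_ofPred_eq, mem_preimage, Formula.realize_relabel]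
  congr! 1
  ext ((i | i) | i) <;> rfl

theorem DefinableTypeOver.definable_preimage_coe (h : DefinableTypeOver S a) {γ : Type*}
    [Finite γ] {Z : Set (γ → U)} (hZ : ((S : Set U) ∪ range a).Definable L Z) :
    (univ : Set S).Definable L {c : γ → S | (fun i => (c i : U)) ∈ Z} := by
  obtain ⟨D, hD, φ, rfl⟩ := exists_finset_formula_of_definable_union_range hZ
  exact h.definable_setOf_realize_sumElim φ fun x => ⟨x, hD x.2⟩

end

/-- If `tp(a₁/M)` is definable and `a₂ ∈ acl(M a₁)`, then `tp(a₂/M)` is definable.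
(Here `M` is an elementary substructure of the monster model `U`.) -/
theorem definableTypeOver_of_mem_aclSet {U : Type u} [L.Structure U]
    (M : L.ElementarySubstructure U) (a₁ a₂ : U)
    (h₁ : DefinableTypeOver M (fun _ : Fin 1 => a₁))
    (h₂ : a₂ ∈ aclSet L ((M : Set U) ∪ {a₁})) :
    DefinableTypeOver M (fun _ : Fin 1 => a₂) := by
  obtain ⟨X₀, hX₀, ha₂X₀, hX₀fin⟩ := exists_finite_definable_of_mem_aclSet h₂
  obtain ⟨X, ⟨hX, ha₂X⟩, hX_least⟩ :=
    exists_isLeast_of_inter_mem (F := {X | ((M : Set U) ∪ {a₁}).Definable L X ∧ (fun _ => a₂) ∈ X})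
      (fun s hs t ht => ⟨hs.1.inter ht.1, hs.2, ht.2⟩) ⟨hX₀, ha₂X₀⟩ hX₀fin
  intro n ψ
  have hZ := definable_setOf_subset_realize hX ψ
  rw [← range_const (ι := Fin 1)] at hZ
  convert h₁.definable_preimage_coe hZ using 1
  ext c
  exact ⟨fun hc => hX_least ⟨definable_setOf_realize_sumElim ψ fun i => Or.inl (c i).2, hc⟩,
    fun hc => hc ha₂X⟩

end DefinableTypes
end

section
/- Let $(K \subseteq L, v)$ be a valued field extension such that every $y \in L$ is of the form $y = x + a$ with $a \in K$ and $|v(x)| > \Gamma_K$. Then the convex hull of $\Gamma_K$ in $\Gamma_L$ equals $\Gamma_K$, and the residue field of $L$ with respect to the coarsened valuation $w$ (composition of $v$ with the quotient $\Gamma_L \to \Gamma_L/\Gamma_K$) is isomorphic to $K$ via the map sending $y$ with $w(y) \ge 0$ to the unique $a \in K$ with $v(y-a) > \Gamma_K$. -/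
/-! Write `y = x + a` with `a ∈ K`. If `v x` lay above `Γ_K`, so would `v y = v x`; hence on the
valuation ring of the coarsening `w` the summand `x` is infinitesimal (`v x > Γ_K` additively).
The infinitesimals form an ideal of that ring and contain no nonzero element of `K`, so `a` is
unique and `y ↦ a` is a ring homomorphism fixing `K`. If moreover `v y` is bounded below by a
value of `K`, then `a ≠ 0` and `v y = v a`, so `Γ_K` is convex in `Γ_L`. -/

open Set

namespace Coarsening

variable {K L Γ : Type*} [Field K] [Field L] [Algebra K L]
  [LinearOrderedCommGroupWithZero Γ]

/-- `v x` lies outside the convex hull of the value group `Γ_K` of `K`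
(`|v(x)| > Γ_K` in additive notation). -/
def OutsideHull (K : Type*) [Field K] [Algebra K L] (v : Valuation L Γ) (x : L) : Prop :=
  (∀ b : K, b ≠ 0 → v x < v (algebraMap K L b)) ∨
    (∀ b : K, b ≠ 0 → v (algebraMap K L b) < v x)

/-- `y` lies in the valuation ring of the coarsening `w` of `v` by the convex hull of `Γ_K`
(in additive notation, `w(y) ≥ 0`): `v y` is bounded by the value of some nonzero element
of `K`. -/
def InCoarseInt (K : Type*) [Field K] [Algebra K L] (v : Valuation L Γ) (y : L) : Prop :=
  ∃ a : K, a ≠ 0 ∧ v y ≤ v (algebraMap K L a)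

/-- `x` is infinitesimal with respect to `Γ_K` (`v(x) > Γ_K` additively): `v x` is smaller
than the value of every nonzero element of `K`. -/
def SmallerThanGammaK (K : Type*) [Field K] [Algebra K L] (v : Valuation L Γ) (x : L) : Prop :=
  ∀ b : K, b ≠ 0 → v x < v (algebraMap K L b)

section Infinitesimals

variable (v : Valuation L Γ)

lemma valuation_algebraMap_pos {b : K} (hb : b ≠ 0) : 0 < v (algebraMap K L b) :=
  zero_lt_iff.mpr ((v.ne_zero_iff).mpr ((map_ne_zero _).mpr hb))

lemma inCoarseInt_algebraMap (a : K) : InCoarseInt K v (algebraMap K L a) := by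
  rcases eq_or_ne a 0 with rfl | ha
  · exact ⟨1, one_ne_zero, by simp⟩
  · exact ⟨a, ha, le_rfl⟩

lemma smallerThanGammaK_zero : SmallerThanGammaK K v 0 := fun _ hb => by
  simpa using valuation_algebraMap_pos v hb

variable {v}

lemma SmallerThanGammaK.add {x y : L} (hx : SmallerThanGammaK K v x)
    (hy : SmallerThanGammaK K v y) : SmallerThanGammaK K v (x + y) := fun b hb =>
  v.map_add_lt (hx b hb) (hy b hb)

lemma SmallerThanGammaK.mul_left {u t : L} (hu : InCoarseInt K v u)
    (ht : SmallerThanGammaK K v t) : SmallerThanGammaK K v (u * t) := by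
  intro b hb
  obtain ⟨c, hc, huc⟩ := hu
  calc v (u * t) ≤ v (algebraMap K L c) * v t := by
        rw [v.map_mul]; exact mul_le_mul_left huc _
    _ < v (algebraMap K L c) * v (algebraMap K L (c⁻¹ * b)) :=
        mul_lt_mul_of_pos_left (ht _ (mul_ne_zero (inv_ne_zero hc) hb))
          (valuation_algebraMap_pos v hc)
    _ = v (algebraMap K L b) := by
        rw [← v.map_mul, ← map_mul, ← mul_assoc, mul_inv_cancel₀ hc, one_mul]

lemma eq_of_smallerThanGammaK_sub {y : L} {a a' : K}
    (ha : SmallerThanGammaK K v (y - algebraMap K L a))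
    (ha' : SmallerThanGammaK K v (y - algebraMap K L a')) : a = a' := by
  by_contra hne
  have hd : a - a' ≠ 0 := sub_ne_zero.mpr hne
  have hdiff : algebraMap K L (a - a') = (y - algebraMap K L a') - (y - algebraMap K L a) := by
    rw [map_sub]; ring
  have := (v.map_sub _ _).trans_lt (max_lt (ha' _ hd) (ha _ hd))
  rw [← hdiff] at this
  exact lt_irrefl _ this

lemma smallerThanGammaK_sub_add {y z : L} {a b : K}
    (hy : SmallerThanGammaK K v (y - algebraMap K L a))
    (hz : SmallerThanGammaK K v (z - algebraMap K L b)) :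
    SmallerThanGammaK K v (y + z - algebraMap K L (a + b)) := by
  have hsplit : y + z - algebraMap K L (a + b)
      = (y - algebraMap K L a) + (z - algebraMap K L b) := by
    rw [map_add]; ring
  exact hsplit ▸ hy.add hz

lemma smallerThanGammaK_sub_mul {y z : L} {a b : K} (hyint : InCoarseInt K v y)
    (hy : SmallerThanGammaK K v (y - algebraMap K L a))
    (hz : SmallerThanGammaK K v (z - algebraMap K L b)) :
    SmallerThanGammaK K v (y * z - algebraMap K L (a * b)) := by
  have hsplit : y * z - algebraMap K L (a * b)
      = y * (z - algebraMap K L b) + algebraMap K L b * (y - algebraMap K L a) := by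
    rw [map_mul]; ring
  exact hsplit ▸ (hz.mul_left hyint).add (hy.mul_left (inCoarseInt_algebraMap v b))

lemma not_inCoarseInt_add_algebraMap {x : L}
    (hx : ∀ b : K, b ≠ 0 → v (algebraMap K L b) < v x) (a : K) :
    ¬ InCoarseInt K v (x + algebraMap K L a) := by
  rintro ⟨c, hc, hle⟩
  have hax : v (algebraMap K L a) < v x := by
    rcases eq_or_ne a 0 with rfl | ha
    · simpa using (valuation_algebraMap_pos v one_ne_zero).trans (hx 1 one_ne_zero)
    · exact hx a ha
  rw [v.map_add_eq_of_lt_left hax] at hle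
  exact (hx c hc).not_ge hle

end Infinitesimals

variable (K) in
def HasHullDecomposition (v : Valuation L Γ) : Prop :=
  ∀ y : L, ∃ (a : K) (x : L), y = x + algebraMap K L a ∧ OutsideHull K v x

variable (K) in
/-- The residue map of the coarsening; its value is arbitrary when no `a` makes `y - a`
infinitesimal. -/
noncomputable def coarseResidue (v : Valuation L Γ) (y : L) : K :=
  Classical.epsilon fun a : K => SmallerThanGammaK K v (y - algebraMap K L a)

section Residue

variable {v : Valuation L Γ}

lemma exists_smallerThanGammaK_sub_of_inCoarseInt (hdec : HasHullDecomposition K v) {y : L}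
    (hy : InCoarseInt K v y) : ∃ a : K, SmallerThanGammaK K v (y - algebraMap K L a) := by
  obtain ⟨a, x, rfl, hsmall | hbig⟩ := hdec y
  · exact ⟨a, by rwa [add_sub_cancel_right]⟩
  · exact absurd hy (not_inCoarseInt_add_algebraMap hbig a)

lemma exists_valuation_eq_algebraMap_of_le (hdec : HasHullDecomposition K v) {y : L}
    (hy : InCoarseInt K v y) {b : K} (hb : b ≠ 0) (hby : v (algebraMap K L b) ≤ v y) :
    ∃ a : K, a ≠ 0 ∧ v y = v (algebraMap K L a) := by
  obtain ⟨a, ha⟩ := exists_smallerThanGammaK_sub_of_inCoarseInt hdec hy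
  rcases eq_or_ne a 0 with rfl | ha0
  · exact absurd hby (by simpa using ha b hb)
  · refine ⟨a, ha0, ?_⟩
    simpa using v.map_add_eq_of_lt_right (ha a ha0)

lemma smallerThanGammaK_sub_coarseResidue {y : L}
    (h : ∃ a : K, SmallerThanGammaK K v (y - algebraMap K L a)) :
    SmallerThanGammaK K v (y - algebraMap K L (coarseResidue K v y)) :=
  Classical.epsilon_spec h

lemma eq_coarseResidue {y : L} {a : K} (ha : SmallerThanGammaK K v (y - algebraMap K L a)) :
    a = coarseResidue K v y :=
  eq_of_smallerThanGammaK_sub ha (smallerThanGammaK_sub_coarseResidue ⟨a, ha⟩)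

lemma coarseResidue_algebraMap (a : K) : coarseResidue K v (algebraMap K L a) = a :=
  (eq_coarseResidue (by simpa using smallerThanGammaK_zero (K := K) v)).symm

lemma smallerThanGammaK_sub_coarseResidue_of_inCoarseInt (hdec : HasHullDecomposition K v)
    {y : L} (hy : InCoarseInt K v y) :
    SmallerThanGammaK K v (y - algebraMap K L (coarseResidue K v y)) :=
  smallerThanGammaK_sub_coarseResidue (exists_smallerThanGammaK_sub_of_inCoarseInt hdec hy)

lemma coarseResidue_add (hdec : HasHullDecomposition K v) {y z : L} (hy : InCoarseInt K v y)
    (hz : InCoarseInt K v z) :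
    coarseResidue K v (y + z) = coarseResidue K v y + coarseResidue K v z :=
  (eq_coarseResidue (smallerThanGammaK_sub_add
    (smallerThanGammaK_sub_coarseResidue_of_inCoarseInt hdec hy)
    (smallerThanGammaK_sub_coarseResidue_of_inCoarseInt hdec hz))).symm

lemma coarseResidue_mul (hdec : HasHullDecomposition K v) {y z : L} (hy : InCoarseInt K v y)
    (hz : InCoarseInt K v z) :
    coarseResidue K v (y * z) = coarseResidue K v y * coarseResidue K v z :=
  (eq_coarseResidue (smallerThanGammaK_sub_mul hy
    (smallerThanGammaK_sub_coarseResidue_of_inCoarseInt hdec hy)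
    (smallerThanGammaK_sub_coarseResidue_of_inCoarseInt hdec hz))).symm

end Residue

/-- Suppose every `y ∈ L` is of the form `y = x + a` with `a ∈ K` and `|v(x)| > Γ_K`.  Then:
(1) the convex hull of `Γ_K` in `Γ_L` equals `Γ_K`; and
(2) the residue field of the coarsened valuation `w` (the composition of `v` with the quotient
`Γ_L → Γ_L/Γ_K`) is isomorphic to `K`, via the map `r` sending each `y` with `w(y) ≥ 0` to the
unique `a ∈ K` with `v(y - a) > Γ_K`; `r` fixes `K`, and respects addition and multiplication
on the valuation ring of `w`. -/
theorem convexHull_eq_and_residue_iso (v : Valuation L Γ)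
    (hdec : ∀ y : L, ∃ (a : K) (x : L), y = x + algebraMap K L a ∧ OutsideHull K v x) :
    -- (1) the convex hull of `Γ_K` in `Γ_L` is `Γ_K`:
    (∀ y : L, y ≠ 0 →
      (∃ b c : K, b ≠ 0 ∧ c ≠ 0 ∧
        v (algebraMap K L b) ≤ v y ∧ v y ≤ v (algebraMap K L c)) →
      ∃ a : K, a ≠ 0 ∧ v y = v (algebraMap K L a)) ∧
    -- (2) the residue field of the coarsening is isomorphic to `K`:
    ∃ r : L → K,
      (∀ a : K, r (algebraMap K L a) = a) ∧
      (∀ y : L, InCoarseInt K v y →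
        SmallerThanGammaK K v (y - algebraMap K L (r y))) ∧
      -- uniqueness of the residue representative:
      (∀ (y : L) (a : K), InCoarseInt K v y →
        SmallerThanGammaK K v (y - algebraMap K L a) → a = r y) ∧
      -- `r` is a ring homomorphism on the valuation ring of `w`:
      (∀ y z : L, InCoarseInt K v y → InCoarseInt K v z →
        r (y + z) = r y + r z ∧ r (y * z) = r y * r z) := by
  refine ⟨fun y _ ⟨b, c, hb, hc, hby, hyc⟩ =>
      exists_valuation_eq_algebraMap_of_le hdec ⟨c, hc, hyc⟩ hb hby,
    coarseResidue K v, coarseResidue_algebraMap,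
    fun y hy => smallerThanGammaK_sub_coarseResidue_of_inCoarseInt hdec hy,
    fun y a _ ha => eq_coarseResidue ha,
    fun y z hy hz => ⟨coarseResidue_add hdec hy hz, coarseResidue_mul hdec hy hz⟩⟩

end Coarsening
end

section
/- Let $T$ be a complete theory such that (i) the class of stably embedded elementary pairs of models of $T$ is axiomatizable in the language of pairs $\mathcal{L}_P$, and (ii) for every model $M$ and every global $M$-definable type $p$, there is a stably embedded pair $(N, M)$ with $p$ realized in $N$. Then $T$ has uniform definability of types: every partitioned formula $\varphi(x;y)$ admits a single formula $\psi(y,z)$ such that for every model $M$ and every definable type $p$ over $M$, some instance $\psi(y,c)$, $c \in M$, is the $\varphi$-definition of $p$. -/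
/-!
Fix `φ(x; y)`. In a stably embedded pair `(A, P)` the `φ`-type over `P` of every tuple is
defined by some `ψ(y; c)` with `c ∈ P`, and for a given `ψ` this is an `L_P`-formula in `x`.
Compactness, applied to an axiomatization of the pairs, therefore yields finitely many candidates
`ψ₁, …, ψₙ` one of which works for every tuple of every stably embedded pair. A definable type
over `M` is realized in a stably embedded pair `(N', M)`, so some `ψᵢ` defines it. The finitely
many candidates are merged into one formula by letting the equality pattern of extra parameters
select among them; this needs two distinct elements, and in a one-element model `φ` defines its
own `φ`-types.
-/

open FirstOrder FirstOrder.Language Set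

universe u

namespace UDCriterion

/-- The language with a single unary predicate `P`. -/
def pLang : FirstOrder.Language.{u, u} where
  Functions := fun _ => PEmpty
  Relations := fun n => match n with
    | 1 => PUnit
    | _ => PEmpty

variable (L : FirstOrder.Language.{u, u})

/-- The language of pairs `L_P`: `L` together with a new unary predicate `P`. -/
abbrev LP : FirstOrder.Language.{u, u} := L.sum pLang

/-- The interpretation of the predicate `P` in an `L_P`-structure. -/
def predSet (A : Type u) [(LP L).Structure A] : Set A :=
  {x | Structure.RelMap (L := LP L) (M := A) (n := 1) (Sum.inr PUnit.unit) ![x]}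

/-- The type of the tuple `a` over the elementary substructure `S` is definable over `S`. -/
def DefinableTypeOver {L : FirstOrder.Language.{u, u}} {N : Type u} [L.Structure N]
    (S : L.ElementarySubstructure N) {α : Type*} (a : α → N) : Prop :=
  ∀ (n : ℕ) (φ : L.Formula (α ⊕ (Fin n))),
    Set.Definable (Set.univ : Set S) L
      {c : Fin n → S | φ.Realize (Sum.elim a (fun i => ((c i : N))))}

/-- An `L_P`-structure `A` is a stably embedded pair of models of `T` if, with respect to the
`L`-reduct of `A`, `A ⊨ T` and the interpretation of `P` is (the underlying set of) an
elementary `L`-substructure `M` of `A` such that the type over `M` of every finite tuple from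
`A` is `M`-definable. -/
def IsSEPairModel (T : L.Theory) (A : Type u) [(LP L).Structure A] : Prop :=
  letI : L.Structure A := (LHom.sumInl : L →ᴸ LP L).reduct A
  (A ⊨ T) ∧ ∃ S : L.ElementarySubstructure A, (S : Set A) = predSet L A ∧
    ∀ (n : ℕ) (a : Fin n → A), DefinableTypeOver S a

/-- The type `tp(a/M)` (for `a` a tuple in an elementary extension `N` of `M`) is
definable over `M`. -/
def DefTypeVia {L : FirstOrder.Language.{u, u}} {M N : Type u} [L.Structure M] [L.Structure N]
    (h : M ↪ₑ[L] N) {α : Type*} (a : α → N) : Prop :=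
  ∀ (n : ℕ) (φ : L.Formula (α ⊕ Fin n)),
    Set.Definable (Set.univ : Set M) L {c : Fin n → M | φ.Realize (Sum.elim a (h ∘ c))}


section InstanceDefinability

variable {L : FirstOrder.Language} {M : Type*} [L.Structure M] {α : Type*}

def InstanceDefines {β : Type*} (ψ : L.Formula (α ⊕ β)) (s : Set (α → M)) : Prop :=
  ∃ c : β → M, ∀ v, v ∈ s ↔ ψ.Realize (Sum.elim v c)

theorem definable_univ_iff_exists_instanceDefines {s : Set (α → M)} :
    (univ : Set M).Definable L s ↔ ∃ (k : ℕ) (ψ : L.Formula (α ⊕ Fin k)), InstanceDefines ψ s := by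
  classical
  constructor
  · rw [definable_iff_finitely_definable]
    rintro ⟨A, -, hA⟩
    obtain ⟨φ, rfl⟩ := definable_iff_exists_formula_sum.1 hA
    let e := Fintype.equivFin (A : Set M)
    refine ⟨_, φ.relabel (Sum.elim (Sum.inr ∘ e) Sum.inl), (↑) ∘ e.symm, fun v => ?_⟩
    simp only [Formula.realize_relabel, Function.comp_def, mem_ofPred_eq]
    congr! with (x | x)
    simp
  · rintro ⟨k, ψ, c, hc⟩
    refine definable_iff_exists_formula_sum.2
      ⟨ψ.relabel (Sum.elim Sum.inr fun i => Sum.inl ⟨c i, mem_univ _⟩), Set.ext fun v => ?_⟩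
    simp only [hc, Formula.realize_relabel, Function.comp_def, mem_ofPred_eq]
    congr! with (x | x)

def selectFormula {k₁ k₂ : ℕ} (ψ₁ : L.Formula (α ⊕ Fin k₁)) (ψ₂ : L.Formula (α ⊕ Fin k₂)) :
    L.Formula (α ⊕ Fin (k₁ + k₂ + 2)) :=
  let sel : L.Formula (α ⊕ Fin (k₁ + k₂ + 2)) :=
    (Term.var (Sum.inr (Fin.natAdd _ 0))).equal (Term.var (Sum.inr (Fin.natAdd _ 1)))
  (sel ⊓ ψ₁.relabel (Sum.map id (Fin.castAdd 2 ∘ Fin.castAdd k₂))) ⊔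
    (∼sel ⊓ ψ₂.relabel (Sum.map id (Fin.castAdd 2 ∘ Fin.natAdd k₁)))

theorem realize_selectFormula {k₁ k₂ : ℕ} (ψ₁ : L.Formula (α ⊕ Fin k₁))
    (ψ₂ : L.Formula (α ⊕ Fin k₂)) (v : α → M) (c₁ : Fin k₁ → M) (c₂ : Fin k₂ → M) (x y : M) :
    (selectFormula ψ₁ ψ₂).Realize (Sum.elim v (Fin.append (Fin.append c₁ c₂) ![x, y])) ↔
      x = y ∧ ψ₁.Realize (Sum.elim v c₁) ∨ x ≠ y ∧ ψ₂.Realize (Sum.elim v c₂) := by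
  have h₁ : Sum.elim v (Fin.append (Fin.append c₁ c₂) ![x, y]) ∘
      Sum.map id (Fin.castAdd 2 ∘ Fin.castAdd k₂) = Sum.elim v c₁ := by
    ext (i | i) <;> simp
  have h₂ : Sum.elim v (Fin.append (Fin.append c₁ c₂) ![x, y]) ∘
      Sum.map id (Fin.castAdd 2 ∘ Fin.natAdd k₁) = Sum.elim v c₂ := by
    ext (i | i) <;> simp
  simp only [selectFormula, Formula.realize_sup, Formula.realize_inf, Formula.realize_not,
    Formula.realize_equal, Formula.realize_relabel, Term.realize_var, h₁, h₂]
  simp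

theorem InstanceDefines.selectFormula_left [Nonempty M] {k₁ k₂ : ℕ}
    {ψ₁ : L.Formula (α ⊕ Fin k₁)} {s : Set (α → M)} (h : InstanceDefines ψ₁ s)
    (ψ₂ : L.Formula (α ⊕ Fin k₂)) : InstanceDefines (selectFormula ψ₁ ψ₂) s := by
  obtain ⟨c, hc⟩ := h
  obtain ⟨x⟩ := ‹Nonempty M›
  exact ⟨Fin.append (Fin.append c fun _ => x) ![x, x], fun v => by
    simp [hc, realize_selectFormula]⟩

theorem InstanceDefines.selectFormula_right [Nontrivial M] {k₁ k₂ : ℕ}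
    (ψ₁ : L.Formula (α ⊕ Fin k₁)) {ψ₂ : L.Formula (α ⊕ Fin k₂)} {s : Set (α → M)}
    (h : InstanceDefines ψ₂ s) : InstanceDefines (selectFormula ψ₁ ψ₂) s := by
  obtain ⟨c, hc⟩ := h
  obtain ⟨x, y, hxy⟩ := exists_pair_ne M
  exact ⟨Fin.append (Fin.append (fun _ => x) c) ![x, y], fun v => by
    simp [hc, realize_selectFormula, hxy]⟩

def selectList : List ((k : ℕ) × L.Formula (α ⊕ Fin k)) → (k : ℕ) × L.Formula (α ⊕ Fin k)
  | [] => ⟨0, ⊥⟩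
  | j :: l => ⟨_, selectFormula j.2 (selectList l).2⟩

theorem InstanceDefines.selectList [Nontrivial M] {l : List ((k : ℕ) × L.Formula (α ⊕ Fin k))}
    {j : (k : ℕ) × L.Formula (α ⊕ Fin k)} (hj : j ∈ l) {s : Set (α → M)}
    (h : InstanceDefines j.2 s) : InstanceDefines (selectList l).2 s := by
  induction l with
  | nil => cases hj
  | cons i l ih =>
    rcases List.mem_cons.1 hj with rfl | hj
    · exact h.selectFormula_left _
    · exact (ih hj).selectFormula_right _

end InstanceDefinability

section ElementaryEmbedding

variable {L : FirstOrder.Language} {M N : Type*} [L.Structure M] [L.Structure N]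

theorem subsingleton_of_elementaryEmbedding [Subsingleton M] (f : M ↪ₑ[L] N) :
    Subsingleton N := by
  have h := f.map_sentence (Sentence.cardGe L 2)
  simp only [Sentence.realize_cardGe, Nat.cast_ofNat, Cardinal.two_le_iff] at h
  by_contra hN
  obtain ⟨x, y, hxy⟩ := h.2 (not_subsingleton_iff_nontrivial.1 hN).exists_pair_ne
  exact hxy (Subsingleton.elim x y)

theorem instanceDefines_relabel_swap_of_subsingleton [Subsingleton M] [Nonempty M] {α β : Type*}
    (f : M ↪ₑ[L] N) (φ : L.Formula (β ⊕ α)) (a : β → N) :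
    InstanceDefines (φ.relabel Sum.swap) {b : α → M | φ.Realize (Sum.elim a (f ∘ b))} := by
  have := subsingleton_of_elementaryEmbedding f
  obtain ⟨x⟩ := ‹Nonempty M›
  refine ⟨fun _ => x, fun b => ?_⟩
  have ha : Sum.elim a (f ∘ b) = f ∘ Sum.elim (fun _ => x) b := Subsingleton.elim _ _
  rw [mem_ofPred_eq, ha, f.map_formula, Formula.realize_relabel, Sum.elim_swap]

theorem InstanceDefines.comp_equiv {S : Type*} [L.Structure S] {α β : Type*}
    {ψ : L.Formula (α ⊕ β)} {s : Set (α → M)} (h : InstanceDefines ψ s) (g : M ≃[L] S) :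
    InstanceDefines ψ {w : α → S | g.symm ∘ w ∈ s} := by
  obtain ⟨c, hc⟩ := h
  refine ⟨g ∘ c, fun w => ?_⟩
  rw [mem_ofPred_eq, hc, ← StrongHomClass.realize_formula g, Sum.comp_elim]
  congr!
  exact funext fun i => g.apply_symm_apply (w i)

theorem coe_comp_eq_comp_equivRange_symm (f : M ↪ₑ[L] N) {α : Type*}
    (w : α → f.toEmbedding.toHom.range) :
    ((↑) ∘ w : α → N) = f ∘ (f.toEmbedding.equivRange.symm ∘ w) := by
  funext i
  exact congrArg Subtype.val (f.toEmbedding.equivRange.apply_symm_apply (w i)).symm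

theorem isElementary_range (f : M ↪ₑ[L] N) : f.toEmbedding.toHom.range.IsElementary := by
  intro n φ x
  rw [coe_comp_eq_comp_equivRange_symm, f.map_formula,
    ← StrongHomClass.realize_formula f.toEmbedding.equivRange]
  congr!
  exact funext fun i => f.toEmbedding.equivRange.apply_symm_apply (x i)

def elementaryRange (f : M ↪ₑ[L] N) : L.ElementarySubstructure N :=
  ⟨f.toEmbedding.toHom.range, isElementary_range f⟩

theorem DefTypeVia.definableTypeOver_elementaryRange {M N : Type u} [L.Structure M]
    [L.Structure N] {f : M ↪ₑ[L] N} {α : Type*} {a : α → N} (ha : DefTypeVia f a) :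
    DefinableTypeOver (elementaryRange f) a := by
  intro n φ
  obtain ⟨k, ψ, hψ⟩ := definable_univ_iff_exists_instanceDefines.1 (ha n φ)
  refine definable_univ_iff_exists_instanceDefines.2 ⟨k, ψ, ?_⟩
  have hs : {w : Fin n → elementaryRange f | φ.Realize (Sum.elim a fun i => (w i : N))} =
      {w | f.toEmbedding.equivRange.symm ∘ w ∈ {c | φ.Realize (Sum.elim a (f ∘ c))}} := by
    ext w
    exact iff_of_eq (congrArg (fun v => φ.Realize (Sum.elim a v))
      (coe_comp_eq_comp_equivRange_symm f w))
  rw [hs]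
  exact hψ.comp_equiv f.toEmbedding.equivRange

end ElementaryEmbedding

section Pairs

variable {L}

abbrev pLangStructure {A : Type u} (s : Set A) : pLang.{u}.Structure A where
  funMap f := PEmpty.elim f
  RelMap _ x := ∀ i, x i ∈ s

theorem predSet_pLangStructure {A : Type u} [L.Structure A] (s : Set A) :
    letI := pLangStructure s
    predSet L A = s := by
  ext x
  exact ⟨fun h => h 0, fun h i => by rwa [Fin.fin_one_eq_zero i]⟩

theorem isSEPairModel_range {T : L.Theory} {M N : Type u} [L.Structure M] [L.Structure N]
    [N ⊨ T] (f : M ↪ₑ[L] N) (hf : ∀ (n : ℕ) (b : Fin n → N), DefTypeVia f b) :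
    letI := pLangStructure (range f)
    IsSEPairModel L T N := by
  let := pLangStructure (range f)
  refine ⟨‹N ⊨ T›, elementaryRange f, ?_, fun n b => (hf n b).definableTypeOver_elementaryRange⟩
  rw [predSet_pLangStructure]
  exact Hom.range_coe _

variable {α β : Type*}

def inP (b : β) : (LP L).Formula β :=
  Relations.formula₁ (Sum.inr PUnit.unit : (LP L).Relations 1) (Term.var b)

noncomputable def allsInP (β : Type*) [Finite β] (φ : (LP L).Formula (α ⊕ β)) :
    (LP L).Formula α :=
  ((Formula.iInf fun b => inP (Sum.inr b)).imp φ).iAlls β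

noncomputable def exsInP (β : Type*) [Finite β] (φ : (LP L).Formula (α ⊕ β)) :
    (LP L).Formula α :=
  ((Formula.iInf fun b => inP (Sum.inr b)) ⊓ φ).iExs β

variable {A : Type u} [(LP L).Structure A]

theorem realize_inP (b : β) (v : β → A) : (inP (L := L) b).Realize v ↔ v b ∈ predSet L A := by
  show Structure.RelMap _ _ ↔ Structure.RelMap _ _
  refine iff_of_eq (congrArg _ (funext fun i => ?_))
  rw [Fin.fin_one_eq_zero i]
  rfl

theorem realize_allsInP [Finite β] (φ : (LP L).Formula (α ⊕ β)) (v : α → A) :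
    (allsInP β φ).Realize v ↔
      ∀ b : β → A, (∀ i, b i ∈ predSet L A) → φ.Realize (Sum.elim v b) := by
  simp [allsInP, realize_inP]

theorem realize_exsInP [Finite β] (φ : (LP L).Formula (α ⊕ β)) (v : α → A) :
    (exsInP β φ).Realize v ↔
      ∃ b : β → A, (∀ i, b i ∈ predSet L A) ∧ φ.Realize (Sum.elim v b) := by
  simp [exsInP, realize_inP]

end Pairs

section DefinedInP

variable {L} {α β γ : Type*}

noncomputable def definedInPBy [Finite β] [Finite γ] (φ : L.Formula (α ⊕ β))
    (ψ : L.Formula (β ⊕ γ)) : (LP L).Formula α :=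
  exsInP γ <| allsInP β <|
    ((LHom.sumInl.onFormula φ).relabel (Sum.map Sum.inl id)).iff
      ((LHom.sumInl.onFormula ψ).relabel (Sum.elim Sum.inr (Sum.inl ∘ Sum.inr)))

theorem realize_definedInPBy [Finite β] [Finite γ] {A : Type u} [L.Structure A]
    [(LP L).Structure A] [(LHom.sumInl : L →ᴸ LP L).IsExpansionOn A]
    (φ : L.Formula (α ⊕ β)) (ψ : L.Formula (β ⊕ γ)) (a : α → A) :
    (definedInPBy φ ψ).Realize a ↔ ∃ c : γ → A, (∀ i, c i ∈ predSet L A) ∧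
      ∀ b : β → A, (∀ j, b j ∈ predSet L A) →
        (φ.Realize (Sum.elim a b) ↔ ψ.Realize (Sum.elim b c)) := by
  simp only [definedInPBy, realize_exsInP, realize_allsInP, Formula.realize_iff,
    Formula.realize_relabel, LHom.realize_onFormula, Sum.elim_comp_map, Sum.comp_elim,
    Sum.elim_comp_inl, Sum.elim_comp_inr, ← Function.comp_assoc, Function.comp_id]

theorem IsSEPairModel.exists_realize_definedInPBy {T : L.Theory} {A : Type u}
    [(LP L).Structure A] (hA : IsSEPairModel L T A) {d m : ℕ} (φ : L.Formula (Fin d ⊕ Fin m))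
    (a : Fin d → A) :
    ∃ j : (k : ℕ) × L.Formula (Fin m ⊕ Fin k), (definedInPBy φ j.2).Realize a := by
  let := (LHom.sumInl : L →ᴸ LP L).reduct A
  obtain ⟨-, S, hS, hdef⟩ := hA
  obtain ⟨k, ψ, c, hc⟩ := definable_univ_iff_exists_instanceDefines.1 (hdef d a m φ)
  refine ⟨⟨k, ψ⟩, (realize_definedInPBy φ ψ a).2 ⟨(↑) ∘ c, ?_, fun b hb => ?_⟩⟩
  · exact fun i => hS ▸ (c i).2
  · let w : Fin m → S := fun j => ⟨b j, (hS ▸ hb j : b j ∈ (S : Set A))⟩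
    refine (hc w).trans ((S.subtype.map_formula ψ _).symm.trans ?_)
    rw [Sum.comp_elim, ElementarySubstructure.coe_subtype]
    rfl

theorem instanceDefines_of_realize_definedInPBy [Finite β] [Finite γ] {M N : Type u}
    [L.Structure M] [L.Structure N] (f : M ↪ₑ[L] N) {φ : L.Formula (α ⊕ β)}
    {ψ : L.Formula (β ⊕ γ)} {a : α → N}
    (h : letI := pLangStructure (range f); (definedInPBy φ ψ).Realize a) :
    InstanceDefines ψ {b : β → M | φ.Realize (Sum.elim a (f ∘ b))} := by
  let := pLangStructure (range f)
  rw [realize_definedInPBy, predSet_pLangStructure] at h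
  obtain ⟨c, hc, hb⟩ := h
  choose c₀ hc₀ using hc
  refine ⟨c₀, fun b => (hb (f ∘ b) fun j => mem_range_self (b j)).trans ?_⟩
  rw [← f.map_formula, Sum.comp_elim, show f ∘ c₀ = c from funext hc₀]

end DefinedInP

universe v w

theorem exists_finset_forall_exists_realize {L' : FirstOrder.Language.{u, v}} (T : L'.Theory)
    {α : Type w} {ι : Type*} (χ : ι → L'.Formula α)
    (h : ∀ (A : Type (max u v w)) [L'.Structure A] [Nonempty A], A ⊨ T →
      ∀ a : α → A, ∃ i, (χ i).Realize a) :
    ∃ F : Finset ι, ∀ (A : Type*) [L'.Structure A] [Nonempty A], A ⊨ T →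
      ∀ a : α → A, ∃ i ∈ F, (χ i).Realize a := by
  classical
  let T' : Finset ι → L'[[α]].Theory := fun F =>
    (L'.lhomWithConstants α).onTheory T ∪ (fun i => Formula.equivSentence (χ i).not) '' F
  have hT' : ¬ Theory.IsSatisfiable (⋃ F, T' F) := by
    rintro ⟨B⟩
    let := (L'.lhomWithConstants α).reduct B
    have hB : B ⊨ T := (LHom.onTheory_model _ _).1
      (B.is_model.mono (subset_iUnion_of_subset ∅ subset_union_left))
    obtain ⟨i, hi⟩ := h B hB fun x => L'.con x
    have hnot : B ⊨ Formula.equivSentence (χ i).not :=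
      Theory.realize_sentence_of_mem (⋃ F, T' F)
        (mem_iUnion.2 ⟨{i}, Or.inr ⟨i, Finset.mem_singleton_self i, rfl⟩⟩)
    rw [Formula.realize_equivSentence, Formula.realize_not] at hnot
    exact hnot hi
  have hdir : Directed (· ⊆ ·) T' :=
    Monotone.directed_le fun F G hFG => union_subset_union_right _ (image_mono hFG)
  rw [Theory.isSatisfiable_directed_union_iff hdir] at hT'
  simp only [not_forall] at hT'
  obtain ⟨F, hF⟩ := hT'
  refine ⟨F, fun A _ _ hA a => ?_⟩
  by_contra! ha
  let := constantsOn.structure a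
  have : A ⊨ T' F := by
    refine Theory.model_union_iff.2 ⟨(LHom.onTheory_model _ _).2 hA, (Theory.model_iff _).2 ?_⟩
    rintro _ ⟨i, hi, rfl⟩
    rw [Formula.realize_equivSentence, Formula.realize_not]
    exact ha i hi
  exact hF (Theory.Model.isSatisfiable A)

theorem uniform_definability_of_pairs (T : L.Theory)
    (hi : ∃ Tp : (LP L).Theory, ∀ (A : Type u) (_ : (LP L).Structure A),
      A ⊨ Tp ↔ IsSEPairModel L T A)
    (hii : ∀ (M N : Theory.ModelType.{u, u, u} T) (h : (M : Type u) ↪ₑ[L] (N : Type u))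
      (d : ℕ) (a : Fin d → N), DefTypeVia h a →
      ∃ (N' : Theory.ModelType.{u, u, u} T) (h' : (M : Type u) ↪ₑ[L] (N' : Type u))
        (a' : Fin d → N'),
        (∀ (n : ℕ) (b : Fin n → N'), DefTypeVia h' b) ∧
        (∀ (n : ℕ) (ψ : L.Formula (Fin d ⊕ Fin n)) (c : Fin n → M),
          ψ.Realize (Sum.elim a' (h' ∘ c)) ↔ ψ.Realize (Sum.elim a (h ∘ c)))) :
    ∀ (d m : ℕ) (φ : L.Formula (Fin d ⊕ Fin m)),
      ∃ (k : ℕ) (ψ : L.Formula (Fin m ⊕ Fin k)),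
        ∀ (M N : Theory.ModelType.{u, u, u} T) (h : (M : Type u) ↪ₑ[L] (N : Type u))
          (a : Fin d → N), DefTypeVia h a →
          ∃ c : Fin k → M, ∀ b : Fin m → M,
            φ.Realize (Sum.elim a (h ∘ b)) ↔ ψ.Realize (Sum.elim b c) := by
  intro d m φ
  obtain ⟨Tp, hTp⟩ := hi
  obtain ⟨F, hF⟩ := exists_finset_forall_exists_realize Tp
    (fun j : (k : ℕ) × L.Formula (Fin m ⊕ Fin k) => definedInPBy φ j.2)
    fun A _ _ hA a => ((hTp A _).1 hA).exists_realize_definedInPBy φ a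
  refine ⟨_, selectFormula (φ.relabel Sum.swap) (selectList F.toList).2,
    fun M N h a ha => ?_⟩
  -- In a one-element model the switch parameters are equal, so the first candidate is `φ` itself.
  rcases subsingleton_or_nontrivial M with hM | hM
  · exact (instanceDefines_relabel_swap_of_subsingleton h φ a).selectFormula_left _
  · obtain ⟨N', h', a', hN', ha'⟩ := hii M N h d a ha
    let := pLangStructure (range h')
    obtain ⟨j, hjF, hj⟩ := hF N' ((hTp N' _).2 (isSEPairModel_range h' hN')) a'
    have hdef := instanceDefines_of_realize_definedInPBy h' hj
    rw [show {b | φ.Realize (Sum.elim a' (h' ∘ b))} = {b | φ.Realize (Sum.elim a (h ∘ b))}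
      from Set.ext fun b => ha' m φ b] at hdef
    exact (hdef.selectList (Finset.mem_toList.2 hjF)).selectFormula_right _

end UDCriterion
end

section
/- Let $T$ be a complete theory with uniform definability of types, and define for a model $M$ the map $\tau$ sending each global $M$-definable type $p$ in variables $x$ to the tuple of canonical parameters $(c(p,\varphi))_\varphi$ of its uniform $\varphi$-definitions (in $T^{\mathrm{eq}}$, with canonical parameters made unique). Then $\tau$ is injective and its image is the set of parameter tuples $(c_\varphi)_\varphi$ satisfying, for each $\varphi(x;y)$, the condition $(\forall y)(\exists x)(\varphi(x,y) \leftrightarrow d\varphi(y,c_\varphi))$, assuming the scheme $\varphi \mapsto d\varphi$ commutes with conjunction and negation. Consequently the space of definable types is in bijection with a $*$-definable set. -/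
open FirstOrder FirstOrder.Language Set

universe u

namespace ProDef

variable {L : FirstOrder.Language.{u, u}}

/-- The type `tp(a/M)` (for `a` a tuple in an elementary extension `N` of `M`) is
definable over `M`. -/
def DefTypeVia {M N : Type u} [L.Structure M] [L.Structure N] (h : M ↪ₑ[L] N) {α : Type*}
    (a : α → N) : Prop :=
  ∀ (n : ℕ) (φ : L.Formula (α ⊕ Fin n)),
    Set.Definable (Set.univ : Set M) L {c : Fin n → M | φ.Realize (Sum.elim a (h ∘ c))}

variable (L)

/-- The index set `Φ` of partitioned formulas `φ(x; y)` with `x` of length `d` and `y` a finite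
tuple of variables. -/
def Idx (d : ℕ) : Type u := (m : ℕ) × L.Formula (Fin d ⊕ Fin m)

variable {d : ℕ}

/-- The negation of a partitioned formula. -/
def negIdx (i : Idx L d) : Idx L d := ⟨i.1, i.2.not⟩

/-- The conjunction of two partitioned formulas (in disjoint `y`-variables). -/
def conjIdx (i j : Idx L d) : Idx L d :=
  ⟨i.1 + j.1, (i.2.relabel (Sum.map id (Fin.castAdd j.1))) ⊓
    (j.2.relabel (Sum.map id (Fin.natAdd i.1)))⟩

variable {L}

/-- `c` is the family of canonical parameters of the definitions of the type `tp(a/M)` with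
respect to the uniform definition scheme `dφ`: for each partitioned formula `i = φ(x;y)`,
`dφ i (y, c i)` is the `φ`-definition of `tp(a/M)`. -/
def IsCodes {k : Idx L d → ℕ} (dφ : ∀ i : Idx L d, L.Formula (Fin i.1 ⊕ Fin (k i)))
    {M N : Type u} [L.Structure M] [L.Structure N] (h : M ↪ₑ[L] N)
    (a : Fin d → N) (c : ∀ i : Idx L d, Fin (k i) → M) : Prop :=
  ∀ (i : Idx L d) (b : Fin i.1 → M),
    i.2.Realize (Sum.elim a (h ∘ b)) ↔ (dφ i).Realize (Sum.elim b (c i))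

/-- The family of parameters `c` is coherent with respect to Boolean combinations: the scheme
`d` factors through negations and conjunctions. -/
def Coherent {k : Idx L d → ℕ} (dφ : ∀ i : Idx L d, L.Formula (Fin i.1 ⊕ Fin (k i)))
    {M : Type u} [L.Structure M] (c : ∀ i : Idx L d, Fin (k i) → M) : Prop :=
  (∀ (i : Idx L d) (b : Fin i.1 → M),
    (dφ (negIdx L i)).Realize (Sum.elim b (c (negIdx L i))) ↔
      ¬ (dφ i).Realize (Sum.elim b (c i))) ∧
  (∀ (i j : Idx L d) (b : Fin (i.1 + j.1) → M),
    (dφ (conjIdx L i j)).Realize (Sum.elim b (c (conjIdx L i j))) ↔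
      ((dφ i).Realize (Sum.elim (b ∘ Fin.castAdd j.1) (c i)) ∧
        (dφ j).Realize (Sum.elim (b ∘ Fin.natAdd i.1) (c j))))

/-- The family `c` satisfies the conditions `Θ`: for each partitioned formula `φ(x;y)`,
`(∀ y)(∃ x)(φ(x,y) ↔ dφ(y, c_φ))`. -/
def SatTheta {k : Idx L d → ℕ} (dφ : ∀ i : Idx L d, L.Formula (Fin i.1 ⊕ Fin (k i)))
    {M : Type u} [L.Structure M] (c : ∀ i : Idx L d, Fin (k i) → M) : Prop :=
  ∀ (i : Idx L d) (b : Fin i.1 → M), ∃ x : Fin d → M,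
    (i.2.Realize (Sum.elim x b) ↔ (dφ i).Realize (Sum.elim b (c i)))

/-!
A type over `M` is determined by its definitions, which gives injectivity. If `c` codes
`tp(a/M)`, then `c` is coherent because the definitions respect the Boolean operations, and `Θ`
holds because a formula over `M` satisfied by `a` is, by elementarity, satisfied in `M`.
Conversely, for coherent `c` satisfying `Θ` the set `{φ(x, b) : ⊨ dφ(b, c_φ)}` is closed under
conjunction, so each finite part of it is implied by a single member, which `Θ` realizes in `M`.
By compactness it is realized by some `a` in an elementary extension of `M`; closure under
negation makes `c` the codes of `tp(a/M)`, and a type with codes is definable.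
-/

theorem realize_conjIdx {N : Type*} [L.Structure N] (i j : Idx L d) (x : Fin d → N)
    (b : Fin (i.1 + j.1) → N) :
    (conjIdx L i j).2.Realize (Sum.elim x b) ↔
      i.2.Realize (Sum.elim x (b ∘ Fin.castAdd j.1)) ∧
        j.2.Realize (Sum.elim x (b ∘ Fin.natAdd i.1)) := by
  simp only [conjIdx, Formula.realize_inf, Formula.realize_relabel, Sum.elim_comp_map,
    Function.comp_id]

theorem realize_negIdx {N : Type*} [L.Structure N] (i : Idx L d) (v : Fin d ⊕ Fin i.1 → N) :
    (negIdx L i).2.Realize v ↔ ¬ i.2.Realize v :=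
  Formula.realize_not

theorem _root_.FirstOrder.Language.ElementaryEmbedding.exists_realize_of_realize
    {M N : Type*} [L.Structure M] [L.Structure N] (h : M ↪ₑ[L] N) {α β : Type*} [Finite α]
    (φ : L.Formula (α ⊕ β)) (b : β → M) {x : α → N} (hx : φ.Realize (Sum.elim x (h ∘ b))) :
    ∃ y : α → M, φ.Realize (Sum.elim y b) := by
  have hN : ((φ.relabel Sum.swap).iExs α).Realize (h ∘ b) := by
    simp only [Formula.realize_iExs, Formula.realize_relabel, Sum.elim_swap]
    exact ⟨x, hx⟩
  simpa only [Formula.realize_iExs, Formula.realize_relabel, Sum.elim_swap] using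
    (h.map_formula _ b).1 hN

section Codes

variable {k : Idx L d → ℕ} {dφ : ∀ i : Idx L d, L.Formula (Fin i.1 ⊕ Fin (k i))}
  {M N : Type u} [L.Structure M] [L.Structure N] {h : M ↪ₑ[L] N} {a : Fin d → N}
  {c : ∀ i : Idx L d, Fin (k i) → M}

theorem IsCodes.coherent (hc : IsCodes dφ h a c) : Coherent dφ c := by
  refine ⟨fun i b => ?_, fun i j b => ?_⟩
  · exact (hc (negIdx L i) b).symm.trans ((realize_negIdx i _).trans (not_congr (hc i b)))
  · exact (hc (conjIdx L i j) b).symm.trans ((realize_conjIdx i j a (h ∘ b)).trans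
      (and_congr (hc i _) (hc j _)))

theorem IsCodes.satTheta (hc : IsCodes dφ h a c) : SatTheta dφ c := by
  intro i b
  by_cases hd : (dφ i).Realize (Sum.elim b (c i))
  · obtain ⟨x, hx⟩ := h.exists_realize_of_realize i.2 b ((hc i b).2 hd)
    exact ⟨x, iff_of_true hx hd⟩
  · have ha : (negIdx L i).2.Realize (Sum.elim a (h ∘ b)) :=
      (realize_negIdx i _).2 (mt (hc i b).1 hd)
    obtain ⟨x, hx⟩ := h.exists_realize_of_realize (negIdx L i).2 b ha
    exact ⟨x, iff_of_false ((realize_negIdx i _).1 hx) hd⟩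

theorem IsCodes.defTypeVia (hc : IsCodes dφ h a c) : DefTypeVia h a := by
  intro n φ
  rw [Set.definable_iff_exists_formula_sum]
  refine ⟨(dφ ⟨n, φ⟩).relabel (Sum.elim Sum.inr fun j => Sum.inl ⟨c ⟨n, φ⟩ j, mem_univ _⟩), ?_⟩
  ext e
  simp only [mem_ofPred_eq, Formula.realize_relabel, Sum.comp_elim]
  exact hc ⟨n, φ⟩ e

end Codes

/-- The partial type `{φ(x, b) : ⊨ dφ(b, c_φ)}` over `M` determined by a family of parameters. -/
def codedType {k : Idx L d → ℕ} (dφ : ∀ i : Idx L d, L.Formula (Fin i.1 ⊕ Fin (k i)))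
    {M : Type u} [L.Structure M] (c : ∀ i : Idx L d, Fin (k i) → M) :
    Set ((i : Idx L d) × (Fin i.1 → M)) :=
  {p | (dφ p.1).Realize (Sum.elim p.2 (c p.1))}

section Realization

variable {M : Type u}

/-- The sentence `φ(a, b)` of `L[[M ⊕ Fin d]]`, where the constants `Sum.inr j` stand for the
coordinates of a realization `a` and the constants `Sum.inl m` for the parameters. -/
noncomputable def paramSentence (p : (i : Idx L d) × (Fin i.1 → M)) : L[[M ⊕ Fin d]].Sentence :=
  Formula.equivSentence (p.1.2.relabel (Sum.elim Sum.inr (Sum.inl ∘ p.2)))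

theorem realize_paramSentence {N : Type*} [L.Structure N] [L[[M ⊕ Fin d]].Structure N]
    [(L.lhomWithConstants (M ⊕ Fin d)).IsExpansionOn N] (p : (i : Idx L d) × (Fin i.1 → M)) :
    N ⊨ paramSentence p ↔ p.1.2.Realize
      (Sum.elim (fun j => (L.con (Sum.inr j : M ⊕ Fin d) : N))
        (fun m => (L.con (Sum.inl (p.2 m) : M ⊕ Fin d) : N))) := by
  simp only [paramSentence, Formula.realize_equivSentence, Formula.realize_relabel, Sum.comp_elim]
  rfl

variable [L.Structure M]

theorem Coherent.exists_mem_codedType_imp {k : Idx L d → ℕ}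
    {dφ : ∀ i : Idx L d, L.Formula (Fin i.1 ⊕ Fin (k i))} {c : ∀ i : Idx L d, Fin (k i) → M}
    (hcoh : Coherent dφ c) (hsat : SatTheta dφ c) (s : Finset ((i : Idx L d) × (Fin i.1 → M)))
    (hs : ↑s ⊆ codedType dφ c) :
    ∃ q ∈ codedType dφ c, ∀ x : Fin d → M, q.1.2.Realize (Sum.elim x q.2) →
      ∀ p ∈ s, p.1.2.Realize (Sum.elim x p.2) := by
  classical
  induction s using Finset.induction_on with
  | empty =>
    obtain ⟨x, hx⟩ := hsat ⟨0, ⊤⟩ finZeroElim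
    exact ⟨⟨⟨0, ⊤⟩, finZeroElim⟩, hx.1 (by simp), fun _ _ _ hp => absurd hp (Finset.notMem_empty _)⟩
  | insert p s _ ih =>
    obtain ⟨q, hq, hqs⟩ := ih ((Finset.coe_subset.2 (Finset.subset_insert p s)).trans hs)
    refine ⟨⟨conjIdx L p.1 q.1, Fin.append p.2 q.2⟩, ?_, fun x hx r hr => ?_⟩
    · refine (hcoh.2 p.1 q.1 _).2 ?_
      simp only [Function.comp_def, Fin.append_left, Fin.append_right]
      exact ⟨hs (Finset.mem_insert_self p s), hq⟩
    · simp only [realize_conjIdx, Function.comp_def, Fin.append_left, Fin.append_right] at hx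
      rcases Finset.mem_insert.1 hr with rfl | hr
      exacts [hx.1, hqs x hx.2 r hr]

def realizingTheory (S : Set ((i : Idx L d) × (Fin i.1 → M))) : L[[M ⊕ Fin d]].Theory :=
  (L.lhomWithConstantsMap (Sum.inl : M → M ⊕ Fin d)).onTheory (L.elementaryDiagram M) ∪
    paramSentence '' S

theorem isSatisfiable_realizingTheory [Nonempty M] (S : Set ((i : Idx L d) × (Fin i.1 → M)))
    (hS : ∀ s : Finset ((i : Idx L d) × (Fin i.1 → M)), ↑s ⊆ S →
      ∃ x : Fin d → M, ∀ p ∈ s, p.1.2.Realize (Sum.elim x p.2)) :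
    (realizingTheory S).IsSatisfiable := by
  classical
  rw [Theory.isSatisfiable_iff_isFinitelySatisfiable]
  intro T0 hT0
  obtain ⟨s, hsS, hs⟩ := Finset.subset_set_image_iff.1
    (show ↑(T0.filter (· ∈ paramSentence '' S)) ⊆ paramSentence '' S from
      fun σ hσ => (Finset.mem_filter.1 hσ).2)
  obtain ⟨x, hx⟩ := hS s hsS
  let : (constantsOn (M ⊕ Fin d)).Structure M := constantsOn.structure (Sum.elim id x)
  have : (LHom.constantsOnMap (Sum.inl : M → M ⊕ Fin d)).IsExpansionOn M :=
    constantsOnMap_isExpansionOn rfl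
  have : (L.lhomWithConstantsMap (Sum.inl : M → M ⊕ Fin d)).IsExpansionOn M :=
    LHom.sumMap_isExpansionOn _ _ _
  have hM : M ⊨ realizingTheory (↑s : Set ((i : Idx L d) × (Fin i.1 → M))) := by
    refine ((LHom.onTheory_model _ _).2 inferInstance).union ?_
    rw [Theory.model_iff]
    rintro _ ⟨p, hp, rfl⟩
    exact (realize_paramSentence p).2 (hx p hp)
  refine (Theory.Model.isSatisfiable (T := realizingTheory (↑s : Set _)) M).mono fun σ hσ => ?_
  rcases hT0 hσ with hD | hσS
  · exact Or.inl hD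
  · obtain ⟨p, hp, rfl⟩ := Finset.mem_image.1 (hs ▸ Finset.mem_filter.2 ⟨hσ, hσS⟩)
    exact Or.inr ⟨p, hp, rfl⟩

theorem exists_elementaryEmbedding_realize {T : L.Theory} (M : Theory.ModelType.{u, u, u} T)
    (S : Set ((i : Idx L d) × (Fin i.1 → M)))
    (hS : ∀ s : Finset ((i : Idx L d) × (Fin i.1 → M)), ↑s ⊆ S →
      ∃ x : Fin d → M, ∀ p ∈ s, p.1.2.Realize (Sum.elim x p.2)) :
    ∃ (N : Theory.ModelType.{u, u, u} T) (h : (M : Type u) ↪ₑ[L] (N : Type u)) (a : Fin d → N),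
      ∀ p ∈ S, p.1.2.Realize (Sum.elim a (h ∘ p.2)) := by
  obtain ⟨N⟩ := isSatisfiable_realizingTheory S hS
  let : L.Structure N := (L.lhomWithConstants (M ⊕ Fin d)).reduct N
  let : L[[(M : Type u)]].Structure N :=
    (L.lhomWithConstantsMap (Sum.inl : M → M ⊕ Fin d)).reduct N
  have : (L.lhomWithConstantsMap (Sum.inl : M → M ⊕ Fin d)).IsExpansionOn N :=
    LHom.isExpansionOn_reduct _ _
  have : (L.lhomWithConstants M).IsExpansionOn N := ⟨fun _ _ => rfl, fun _ _ => rfl⟩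
  have : N ⊨ L.elementaryDiagram M :=
    (LHom.onTheory_model _ _).1 (N.is_model.mono Set.subset_union_left)
  let h := ElementaryEmbedding.ofModelsElementaryDiagram L M N
  have : N ⊨ T := (h.theory_model_iff T).1 inferInstance
  have ha : ∀ p ∈ S,
      p.1.2.Realize (Sum.elim (fun j => (L.con (Sum.inr j : M ⊕ Fin d) : N)) (h ∘ p.2)) :=
    fun p hp => (realize_paramSentence p).1 (N.is_model.realize_of_mem _ (Or.inr ⟨p, hp, rfl⟩))
  exact ⟨Theory.ModelType.of T N, h, _, ha⟩

end Realization

theorem exists_isCodes_of_coherent {T : L.Theory} (M : Theory.ModelType.{u, u, u} T)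
    {k : Idx L d → ℕ} {dφ : ∀ i : Idx L d, L.Formula (Fin i.1 ⊕ Fin (k i))}
    {c : ∀ i : Idx L d, Fin (k i) → M} (hcoh : Coherent dφ c) (hsat : SatTheta dφ c) :
    ∃ (N : Theory.ModelType.{u, u, u} T) (h : (M : Type u) ↪ₑ[L] (N : Type u))
      (a : Fin d → N), DefTypeVia h a ∧ IsCodes dφ h a c := by
  obtain ⟨N, h, a, ha⟩ := exists_elementaryEmbedding_realize M (codedType dφ c) fun s hs => by
    obtain ⟨q, hq, hqs⟩ := hcoh.exists_mem_codedType_imp hsat s hs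
    obtain ⟨x, hx⟩ := hsat q.1 q.2
    exact ⟨x, hqs x (hx.2 hq)⟩
  have hc : IsCodes dφ h a c := by
    intro i b
    by_cases hd : (dφ i).Realize (Sum.elim b (c i))
    · exact iff_of_true (ha ⟨i, b⟩ hd) hd
    · exact iff_of_false ((realize_negIdx i _).1 (ha ⟨negIdx L i, b⟩ ((hcoh.1 i b).2 hd))) hd
  exact ⟨N, h, a, hc.defTypeVia, hc⟩

theorem tau_injective_and_image_general (T : L.Theory) (d : ℕ)
    (k : Idx L d → ℕ) (dφ : ∀ i : Idx L d, L.Formula (Fin i.1 ⊕ Fin (k i)))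
    (M : Theory.ModelType.{u, u, u} T) :
    -- (1) `τ` is injective: types with the same codes are equal
    (∀ (N N' : Theory.ModelType.{u, u, u} T) (h : (M : Type u) ↪ₑ[L] (N : Type u))
      (h' : (M : Type u) ↪ₑ[L] (N' : Type u)) (a : Fin d → N) (a' : Fin d → N')
      (c : ∀ i : Idx L d, Fin (k i) → M),
      DefTypeVia h a → DefTypeVia h' a' → IsCodes dφ h a c → IsCodes dφ h' a' c →
      ∀ (n : ℕ) (ψ : L.Formula (Fin d ⊕ Fin n)) (e : Fin n → M),
        ψ.Realize (Sum.elim a (h ∘ e)) ↔ ψ.Realize (Sum.elim a' (h' ∘ e))) ∧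
    -- (2) the image of `τ` is the `*`-definable set cut out by `Θ` (within coherent families)
    (∀ c : ∀ i : Idx L d, Fin (k i) → M,
      (Coherent dφ c ∧ SatTheta dφ c) ↔
        ∃ (N : Theory.ModelType.{u, u, u} T) (h : (M : Type u) ↪ₑ[L] (N : Type u))
          (a : Fin d → N), DefTypeVia h a ∧ IsCodes dφ h a c) := by
  refine ⟨fun N N' h h' a a' c _ _ hc hc' n ψ e => (hc ⟨n, ψ⟩ e).trans (hc' ⟨n, ψ⟩ e).symm,
    fun c => ⟨fun ⟨hcoh, hsat⟩ => exists_isCodes_of_coherent M hcoh hsat, ?_⟩⟩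
  rintro ⟨N, h, a, -, hc⟩
  exact ⟨hc.coherent, hc.satTheta⟩

/-- Suppose `T` has uniform definability of types, witnessed by the scheme `dφ` (with uniqueness
of the canonical parameters).  Then the map `τ` sending a definable type to the family of
canonical parameters of its definitions is injective, and its image is exactly the set of
coherent parameter families satisfying the conditions `Θ`; hence the space of definable types
(in variables `x` of length `d`) over a model `M` of `T` is in bijection with a `*`-definable
set. -/
theorem tau_injective_and_image (T : L.Theory) (hT : T.IsComplete) (d : ℕ)
    (k : Idx L d → ℕ) (dφ : ∀ i : Idx L d, L.Formula (Fin i.1 ⊕ Fin (k i)))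
    -- `dφ` is a uniform definition scheme for definable types:
    (hUD : ∀ (M N : Theory.ModelType.{u, u, u} T) (h : (M : Type u) ↪ₑ[L] (N : Type u))
      (a : Fin d → N), DefTypeVia h a → ∃ c, IsCodes dφ h a c)
    -- canonical parameters are unique:
    (huniq : ∀ (M : Theory.ModelType.{u, u, u} T) (i : Idx L d) (c c' : Fin (k i) → M),
      (∀ b : Fin i.1 → M, (dφ i).Realize (Sum.elim b c) ↔ (dφ i).Realize (Sum.elim b c')) →
        c = c')
    (M : Theory.ModelType.{u, u, u} T) :
    -- (1) `τ` is injective: types with the same codes are equal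
    (∀ (N N' : Theory.ModelType.{u, u, u} T) (h : (M : Type u) ↪ₑ[L] (N : Type u))
      (h' : (M : Type u) ↪ₑ[L] (N' : Type u)) (a : Fin d → N) (a' : Fin d → N')
      (c : ∀ i : Idx L d, Fin (k i) → M),
      DefTypeVia h a → DefTypeVia h' a' → IsCodes dφ h a c → IsCodes dφ h' a' c →
      ∀ (n : ℕ) (ψ : L.Formula (Fin d ⊕ Fin n)) (e : Fin n → M),
        ψ.Realize (Sum.elim a (h ∘ e)) ↔ ψ.Realize (Sum.elim a' (h' ∘ e))) ∧
    -- (2) the image of `τ` is the `*`-definable set cut out by `Θ` (within coherent families)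
    (∀ c : ∀ i : Idx L d, Fin (k i) → M,
      (Coherent dφ c ∧ SatTheta dφ c) ↔
        ∃ (N : Theory.ModelType.{u, u, u} T) (h : (M : Type u) ↪ₑ[L] (N : Type u))
          (a : Fin d → N), DefTypeVia h a ∧ IsCodes dφ h a c) :=
  tau_injective_and_image_general T d k dφ M

end ProDef
end
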